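/- For the stationary aggregate Markov process, the true transition matrix satisfies P = diag(π)^{-1}(N^{-1} Cov(n_t, n_{t+1}) + π πᵀ), where n_t are the count vectors of N i.i.d. stationary chains with stationary distribution π having positive entries. -/

import Mathlib

open MeasureTheory ProbabilityTheory BigOperators

/-- for the stationary aggregate Markov process,
`P = diag(π)⁻¹ (N⁻¹ Cov(n_t, n_{t+1}) + π πᵀ)`, stated entrywise. -/
theorem transition_from_aggregate_moments
    {Ω : Type*} [MeasurableSpace Ω] (μ : Measure Ω) [IsProbabilityMeasure μ]
    (S N : ℕ) (hN : 1 ≤ N)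
    (P : Matrix (Fin S) (Fin S) ℝ)
    (hPnn : ∀ i j, 0 ≤ P i j) (hrow : ∀ i, ∑ j, P i j = 1)
    (π : Fin S → ℝ) (hπpos : ∀ i, 0 < π i) (hπsum : ∑ i, π i = 1)
    (hstat : Matrix.vecMul π P = π)
    (xt xt1 : Fin N → Ω → Fin S)
    (hmeas : ∀ m, Measurable (fun ω => (xt m ω, xt1 m ω)))
    (hindep : iIndepFun (fun m ω => (xt m ω, xt1 m ω)) μ)
    (hlaw : ∀ m i j, (μ {ω | xt m ω = i ∧ xt1 m ω = j}).toReal = π i * P i j)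
    (nt nt1 : Ω → Fin S → ℝ)
    (hnt : ∀ ω i, nt ω i = ∑ m, (if xt m ω = i then (1 : ℝ) else 0))
    (hnt1 : ∀ ω j, nt1 ω j = ∑ m, (if xt1 m ω = j then (1 : ℝ) else 0)) :
    ∀ i j, P i j = (π i)⁻¹ *
      ((N : ℝ)⁻¹ * ((∫ ω, nt ω i * nt1 ω j ∂μ)
          - (∫ ω, nt ω i ∂μ) * (∫ ω, nt1 ω j ∂μ))
        + π i * π j) := by
  intro i j
  -- basic measurability
  have hmx : ∀ m, Measurable (xt m) := fun m => (measurable_fst.comp (hmeas m))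
  have hmx1 : ∀ m, Measurable (xt1 m) := fun m => (measurable_snd.comp (hmeas m))
  have hsetA : ∀ (m : Fin N) (i' : Fin S), MeasurableSet {ω | xt m ω = i'} :=
    fun m i' => (hmx m) (measurableSet_singleton i')
  have hsetB : ∀ (m : Fin N) (j' : Fin S), MeasurableSet {ω | xt1 m ω = j'} :=
    fun m j' => (hmx1 m) (measurableSet_singleton j')
  have hsetAB : ∀ (m : Fin N) (i' j' : Fin S),
      MeasurableSet {ω | xt m ω = i' ∧ xt1 m ω = j'} := by
    intro m i' j'
    have : {ω | xt m ω = i' ∧ xt1 m ω = j'} = {ω | xt m ω = i'} ∩ {ω | xt1 m ω = j'} := rfl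
    rw [this]; exact (hsetA m i').inter (hsetB m j')
  -- basic integral of pair indicator
  have Ipair : ∀ (m : Fin N) (i' j' : Fin S),
      (∫ ω, (if xt m ω = i' ∧ xt1 m ω = j' then (1:ℝ) else 0) ∂μ) = π i' * P i' j' := by
    intro m i' j'
    have : (fun ω => (if xt m ω = i' ∧ xt1 m ω = j' then (1:ℝ) else 0))
        = Set.indicator {ω | xt m ω = i' ∧ xt1 m ω = j'} (fun _ => (1:ℝ)) := by
      funext ω; simp [Set.indicator_apply, Set.mem_setOf_eq]
    rw [this, integral_indicator_const _ (hsetAB m i' j'), smul_eq_mul, mul_one, measureReal_def, hlaw]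
  -- integrability of indicators
  have intA : ∀ (m : Fin N), Integrable (fun ω => (if xt m ω = i then (1:ℝ) else 0)) μ := by
    intro m
    have : (fun ω => (if xt m ω = i then (1:ℝ) else 0))
        = Set.indicator {ω | xt m ω = i} (fun _ => (1:ℝ)) := by
      funext ω; simp [Set.indicator_apply, Set.mem_setOf_eq]
    rw [this]; exact (integrable_const (1:ℝ)).indicator (hsetA m i)
  have intB : ∀ (m : Fin N), Integrable (fun ω => (if xt1 m ω = j then (1:ℝ) else 0)) μ := by
    intro m
    have : (fun ω => (if xt1 m ω = j then (1:ℝ) else 0))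
        = Set.indicator {ω | xt1 m ω = j} (fun _ => (1:ℝ)) := by
      funext ω; simp [Set.indicator_apply, Set.mem_setOf_eq]
    rw [this]; exact (integrable_const (1:ℝ)).indicator (hsetB m j)
  have intAB : ∀ (m m' : Fin N), Integrable
      (fun ω => (if xt m ω = i then (1:ℝ) else 0) * (if xt1 m' ω = j then (1:ℝ) else 0)) μ := by
    intro m m'
    have : (fun ω => (if xt m ω = i then (1:ℝ) else 0) * (if xt1 m' ω = j then (1:ℝ) else 0))
        = Set.indicator ({ω | xt m ω = i} ∩ {ω | xt1 m' ω = j}) (fun _ => (1:ℝ)) := by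
      funext ω
      by_cases h1 : xt m ω = i <;> by_cases h2 : xt1 m' ω = j <;>
        simp [Set.indicator_apply, Set.mem_setOf_eq, h1, h2]
    rw [this]
    exact (integrable_const (1:ℝ)).indicator ((hsetA m i).inter (hsetB m' j))
  -- marginal integrals
  have IA : ∀ (m : Fin N), (∫ ω, (if xt m ω = i then (1:ℝ) else 0) ∂μ) = π i := by
    intro m
    have hpt : ∀ ω, (if xt m ω = i then (1:ℝ) else 0)
        = ∑ j', (if xt m ω = i ∧ xt1 m ω = j' then (1:ℝ) else 0) := by
      intro ω
      by_cases h : xt m ω = i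
      · simp [h]
      · simp [h]
    calc (∫ ω, (if xt m ω = i then (1:ℝ) else 0) ∂μ)
        = ∫ ω, ∑ j', (if xt m ω = i ∧ xt1 m ω = j' then (1:ℝ) else 0) ∂μ := by
          congr 1; funext ω; exact hpt ω
      _ = ∑ j', ∫ ω, (if xt m ω = i ∧ xt1 m ω = j' then (1:ℝ) else 0) ∂μ := by
          refine integral_finset_sum _ (fun j' _ => ?_)
          have : (fun ω => (if xt m ω = i ∧ xt1 m ω = j' then (1:ℝ) else 0))
              = Set.indicator {ω | xt m ω = i ∧ xt1 m ω = j'} (fun _ => (1:ℝ)) := by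
            funext ω; simp [Set.indicator_apply, Set.mem_setOf_eq]
          rw [this]; exact (integrable_const (1:ℝ)).indicator (hsetAB m i j')
      _ = ∑ j', π i * P i j' := by simp_rw [Ipair]
      _ = π i := by rw [← Finset.mul_sum, hrow, mul_one]
  have IB : ∀ (m : Fin N), (∫ ω, (if xt1 m ω = j then (1:ℝ) else 0) ∂μ) = π j := by
    intro m
    have hpt : ∀ ω, (if xt1 m ω = j then (1:ℝ) else 0)
        = ∑ i', (if xt m ω = i' ∧ xt1 m ω = j then (1:ℝ) else 0) := by
      intro ω
      by_cases h : xt1 m ω = j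
      · simp [h]
      · simp [h]
    calc (∫ ω, (if xt1 m ω = j then (1:ℝ) else 0) ∂μ)
        = ∫ ω, ∑ i', (if xt m ω = i' ∧ xt1 m ω = j then (1:ℝ) else 0) ∂μ := by
          congr 1; funext ω; exact hpt ω
      _ = ∑ i', ∫ ω, (if xt m ω = i' ∧ xt1 m ω = j then (1:ℝ) else 0) ∂μ := by
          refine integral_finset_sum _ (fun i' _ => ?_)
          have : (fun ω => (if xt m ω = i' ∧ xt1 m ω = j then (1:ℝ) else 0))
              = Set.indicator {ω | xt m ω = i' ∧ xt1 m ω = j} (fun _ => (1:ℝ)) := by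
            funext ω; simp [Set.indicator_apply, Set.mem_setOf_eq]
          rw [this]; exact (integrable_const (1:ℝ)).indicator (hsetAB m i' j)
      _ = ∑ i', π i' * P i' j := by simp_rw [Ipair]
      _ = π j := by
          have := congrFun hstat j
          simpa [Matrix.vecMul, dotProduct] using this
  -- product integrals
  have Iprod : ∀ (m m' : Fin N),
      (∫ ω, (if xt m ω = i then (1:ℝ) else 0) * (if xt1 m' ω = j then (1:ℝ) else 0) ∂μ)
      = if m' = m then π i * P i j else π i * π j := by
    intro m m'
    by_cases hmm : m' = m
    · subst hmm
      have hpt : ∀ ω, (if xt m' ω = i then (1:ℝ) else 0) * (if xt1 m' ω = j then (1:ℝ) else 0)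
          = (if xt m' ω = i ∧ xt1 m' ω = j then (1:ℝ) else 0) := by
        intro ω
        by_cases h1 : xt m' ω = i <;> by_cases h2 : xt1 m' ω = j <;> simp [h1, h2]
      simp only [if_pos rfl]
      calc (∫ ω, (if xt m' ω = i then (1:ℝ) else 0) * (if xt1 m' ω = j then (1:ℝ) else 0) ∂μ)
          = ∫ ω, (if xt m' ω = i ∧ xt1 m' ω = j then (1:ℝ) else 0) ∂μ := by
            congr 1; funext ω; exact hpt ω
        _ = π i * P i j := Ipair m' i j
    · -- independence
      have hind : IndepFun (fun ω => (xt m ω, xt1 m ω)) (fun ω => (xt m' ω, xt1 m' ω)) μ :=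
        hindep.indepFun (fun h => hmm h.symm)
      have hφ : Measurable (fun p : Fin S × Fin S => if p.1 = i then (1:ℝ) else 0) :=
        measurable_of_countable _
      have hψ : Measurable (fun p : Fin S × Fin S => if p.2 = j then (1:ℝ) else 0) :=
        measurable_of_countable _
      have hind2 : IndepFun (fun ω => (if xt m ω = i then (1:ℝ) else 0))
          (fun ω => (if xt1 m' ω = j then (1:ℝ) else 0)) μ := hind.comp hφ hψ
      rw [if_neg hmm]
      have := hind2.integral_mul_eq_mul_integral (intA m).aestronglyMeasurable (intB m').aestronglyMeasurable
      calc (∫ ω, (if xt m ω = i then (1:ℝ) else 0) * (if xt1 m' ω = j then (1:ℝ) else 0) ∂μ)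
          = ∫ ω, ((fun ω => (if xt m ω = i then (1:ℝ) else 0))
              * (fun ω => (if xt1 m' ω = j then (1:ℝ) else 0))) ω ∂μ := rfl
        _ = (∫ ω, (if xt m ω = i then (1:ℝ) else 0) ∂μ)
              * (∫ ω, (if xt1 m' ω = j then (1:ℝ) else 0) ∂μ) := this
        _ = π i * π j := by rw [IA, IB]
  -- the three moments
  have Ent : (∫ ω, nt ω i ∂μ) = N * π i := by
    calc (∫ ω, nt ω i ∂μ)
        = ∫ ω, ∑ m, (if xt m ω = i then (1:ℝ) else 0) ∂μ := by
          congr 1; funext ω; exact hnt ω i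
      _ = ∑ m : Fin N, ∫ ω, (if xt m ω = i then (1:ℝ) else 0) ∂μ :=
          integral_finset_sum _ (fun m _ => intA m)
      _ = ∑ m : Fin N, π i := by simp_rw [IA]
      _ = N * π i := by simp [Finset.sum_const, nsmul_eq_mul]
  have Ent1 : (∫ ω, nt1 ω j ∂μ) = N * π j := by
    calc (∫ ω, nt1 ω j ∂μ)
        = ∫ ω, ∑ m, (if xt1 m ω = j then (1:ℝ) else 0) ∂μ := by
          congr 1; funext ω; exact hnt1 ω j
      _ = ∑ m : Fin N, ∫ ω, (if xt1 m ω = j then (1:ℝ) else 0) ∂μ :=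
          integral_finset_sum _ (fun m _ => intB m)
      _ = ∑ m : Fin N, π j := by simp_rw [IB]
      _ = N * π j := by simp [Finset.sum_const, nsmul_eq_mul]
  have Eprod : (∫ ω, nt ω i * nt1 ω j ∂μ)
      = N * (π i * P i j) + (N * N - N) * (π i * π j) := by
    have hpt : ∀ ω, nt ω i * nt1 ω j
        = ∑ m : Fin N, ∑ m' : Fin N,
            (if xt m ω = i then (1:ℝ) else 0) * (if xt1 m' ω = j then (1:ℝ) else 0) := by
      intro ω
      rw [hnt ω i, hnt1 ω j, Finset.sum_mul_sum]
    calc (∫ ω, nt ω i * nt1 ω j ∂μ)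
        = ∫ ω, ∑ m : Fin N, ∑ m' : Fin N,
            (if xt m ω = i then (1:ℝ) else 0) * (if xt1 m' ω = j then (1:ℝ) else 0) ∂μ := by
          congr 1; funext ω; exact hpt ω
      _ = ∑ m : Fin N, ∫ ω, ∑ m' : Fin N,
            (if xt m ω = i then (1:ℝ) else 0) * (if xt1 m' ω = j then (1:ℝ) else 0) ∂μ :=
          integral_finset_sum _ (fun m _ => integrable_finset_sum _ (fun m' _ => intAB m m'))
      _ = ∑ m : Fin N, ∑ m' : Fin N, ∫ ω,
            (if xt m ω = i then (1:ℝ) else 0) * (if xt1 m' ω = j then (1:ℝ) else 0) ∂μ :=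
          Finset.sum_congr rfl (fun m _ => integral_finset_sum _ (fun m' _ => intAB m m'))
      _ = ∑ m : Fin N, ∑ m' : Fin N, (if m' = m then π i * P i j else π i * π j) :=
          Finset.sum_congr rfl (fun m _ => Finset.sum_congr rfl (fun m' _ => Iprod m m'))
      _ = ∑ m : Fin N, (π i * P i j + (N - 1) * (π i * π j)) := by
          refine Finset.sum_congr rfl (fun m _ => ?_)
          have : ∀ m' : Fin N, (if m' = m then π i * P i j else π i * π j)
              = π i * π j + (if m' = m then π i * P i j - π i * π j else 0) := by
            intro m'; by_cases h : m' = m <;> simp [h]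
          simp_rw [this]
          rw [Finset.sum_add_distrib, Finset.sum_const, Finset.sum_ite_eq' Finset.univ m
            (fun _ => π i * P i j - π i * π j)]
          simp [nsmul_eq_mul]
          ring
      _ = N * (π i * P i j) + (N * N - N) * (π i * π j) := by
          rw [Finset.sum_const, Finset.card_univ, Fintype.card_fin, nsmul_eq_mul]
          ring
  -- final algebra
  rw [Eprod, Ent, Ent1]
  have hπne : π i ≠ 0 := (hπpos i).ne'
  have hNne : (N : ℝ) ≠ 0 := Nat.cast_ne_zero.mpr (Nat.one_le_iff_ne_zero.mp hN)
  field_simp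
  ring
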